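/- Let θ < 0 and a > 0. Then for every n ≥ 0 one has p_n^a(θ) = ∑_{k=1}^n (-1)^{k-1} · p_{n-k}^a(θ) · p_{k-1}^{1/a}(θ) + (-1)^n · p_n^{1/a}(θ); equivalently, the generating functions P̂_{a,θ}(z) := ∑_{n≥0} p_n^a(θ) z^n satisfy P̂_{a,θ}(z) = P̂_{1/a,θ}(-z)/(1 − z·P̂_{1/a,θ}(-z)). -/

import Mathlib

open MeasureTheory Set

/-- Persistence probability `p_n^a(θ)` for the MA(1) process with uniform
innovations on `[-a,1]`. -/
noncomputable def persprob (a θ : ℝ) : ℕ → ℝ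
  | 0 => 1
  | n + 1 =>
    (volume {x : Fin (n + 2) → ℝ |
        (∀ i, x i ∈ Icc (-a) 1) ∧
        ∀ i : Fin (n + 1), θ * x i.castSucc ≤ x i.succ}).toReal / (1 + a) ^ (n + 2)

/-- constraint relation -/
def pok (θ : ℝ) : Option Bool → ℝ → ℝ → Prop
  | none, _, _ => True
  | some true, u, v => θ * u ≤ v
  | some false, u, v => v ≤ θ * u

def cSet (b θ : ℝ) (m : ℕ) (s : ℕ → Option Bool) : Set (Fin (m+1) → ℝ) :=
  {y | (∀ i, y i ∈ Icc (-b) 1) ∧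
    ∀ k, ∀ h : k + 1 ≤ m, pok θ (s k) (y ⟨k, by omega⟩) (y ⟨k+1, by omega⟩)}

lemma cSet_congr (b θ : ℝ) (m : ℕ) {s t : ℕ → Option Bool}
    (h : ∀ i, i + 1 ≤ m → s i = t i) : cSet b θ m s = cSet b θ m t := by
  unfold cSet
  ext y
  refine and_congr Iff.rfl (forall_congr' fun k => forall_congr' fun hk => ?_)
  rw [h k hk]

lemma measurableSet_cSet (b θ : ℝ) (m : ℕ) (s : ℕ → Option Bool) :
    MeasurableSet (cSet b θ m s) := by
  unfold cSet
  apply MeasurableSet.inter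
  · show MeasurableSet {y : Fin (m+1) → ℝ | ∀ i, y i ∈ Icc (-b) 1}
    rw [show {y : Fin (m+1) → ℝ | ∀ i, y i ∈ Icc (-b) 1} = ⋂ i, {y | y i ∈ Icc (-b) 1} by
      ext; simp]
    exact MeasurableSet.iInter fun i => (measurable_pi_apply i) measurableSet_Icc
  · show MeasurableSet {y : Fin (m+1) → ℝ | ∀ k, ∀ h : k + 1 ≤ m,
        pok θ (s k) (y ⟨k, by omega⟩) (y ⟨k+1, by omega⟩)}
    rw [show {y : Fin (m+1) → ℝ | ∀ k, ∀ h : k + 1 ≤ m,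
        pok θ (s k) (y ⟨k, by omega⟩) (y ⟨k+1, by omega⟩)}
      = ⋂ k, ⋂ h : k + 1 ≤ m, {y | pok θ (s k) (y ⟨k, by omega⟩) (y ⟨k+1, by omega⟩)} by
      ext; simp]
    refine MeasurableSet.iInter fun k => MeasurableSet.iInter fun h => ?_
    rcases s k with _ | (_ | _)
    · simp [pok]
    · exact measurableSet_le (measurable_pi_apply _) (measurable_const.mul (measurable_pi_apply _))
    · exact measurableSet_le (measurable_const.mul (measurable_pi_apply _)) (measurable_pi_apply _)

lemma cSet_subset_box (b θ : ℝ) (m : ℕ) (s : ℕ → Option Bool) :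
    cSet b θ m s ⊆ univ.pi fun _ : Fin (m+1) => Icc (-b) 1 := by
  intro y hy
  simp only [mem_pi, mem_univ, forall_true_left]
  exact fun i => hy.1 i

lemma volume_box (b : ℝ) (m : ℕ) :
    volume (univ.pi fun _ : Fin (m+1) => Icc (-b) 1) = ENNReal.ofReal (1+b) ^ (m+1) := by
  rw [volume_pi_pi]
  simp [Real.volume_Icc]

lemma volume_cSet_le (b θ : ℝ) (m : ℕ) (s : ℕ → Option Bool) :
    volume (cSet b θ m s) ≤ ENNReal.ofReal (1+b) ^ (m+1) := by
  rw [← volume_box b m]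
  exact measure_mono (cSet_subset_box b θ m s)

lemma volume_cSet_ne_top (b θ : ℝ) (m : ℕ) (s : ℕ → Option Bool) :
    volume (cSet b θ m s) ≠ ⊤ :=
  ne_top_of_le_ne_top (ENNReal.pow_ne_top ENNReal.ofReal_ne_top) (volume_cSet_le b θ m s)

/-- normalized volume -/
noncomputable def nv (b θ : ℝ) (m : ℕ) (s : ℕ → Option Bool) : ℝ :=
  (volume (cSet b θ m s)).toReal / (1+b)^(m+1)

lemma nv_nonneg {b : ℝ} (hb : 0 < b) (θ : ℝ) (m : ℕ) (s : ℕ → Option Bool) :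
    0 ≤ nv b θ m s := by
  unfold nv; positivity

lemma nv_le_one {b : ℝ} (hb : 0 < b) (θ : ℝ) (m : ℕ) (s : ℕ → Option Bool) :
    nv b θ m s ≤ 1 := by
  unfold nv
  rw [div_le_one (by positivity)]
  calc (volume (cSet b θ m s)).toReal ≤ (ENNReal.ofReal (1+b) ^ (m+1)).toReal :=
        ENNReal.toReal_mono (ENNReal.pow_ne_top ENNReal.ofReal_ne_top) (volume_cSet_le b θ m s)
    _ = (1+b)^(m+1) := by
        rw [ENNReal.toReal_pow, ENNReal.toReal_ofReal (by positivity)]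

lemma nv_zero {b : ℝ} (hb : 0 < b) (θ : ℝ) (s : ℕ → Option Bool) : nv b θ 0 s = 1 := by
  unfold nv
  rw [show cSet b θ 0 s = univ.pi fun _ : Fin 1 => Icc (-b) 1 by
    ext y
    simp only [cSet, mem_setOf_eq, mem_pi, mem_univ, forall_true_left]
    exact ⟨fun h => h.1, fun h => ⟨h, fun k hk => by omega⟩⟩]
  rw [volume_box]
  rw [ENNReal.toReal_pow, ENNReal.toReal_ofReal (by positivity)]
  field_simp

lemma persprob_eq_nv {b : ℝ} (hb : 0 < b) (θ : ℝ) (m : ℕ) :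
    persprob b θ m = nv b θ m (fun _ => some true) := by
  cases m with
  | zero => rw [nv_zero hb]; rfl
  | succ n =>
      show _ / _ = _
      unfold nv
      have hset : {x : Fin (n + 2) → ℝ |
          (∀ i, x i ∈ Icc (-b) 1) ∧
          ∀ i : Fin (n + 1), θ * x i.castSucc ≤ x i.succ}
          = cSet b θ (n+1) (fun _ => some true) := by
        ext y
        simp only [cSet, mem_setOf_eq]
        refine and_congr Iff.rfl ?_
        constructor
        · intro h k hk
          exact h ⟨k, by omega⟩
        · intro h i
          exact h i.val (by omega)
      rw [hset]

lemma volume_cSet_reflect {a : ℝ} (ha : 0 < a) (θ : ℝ) (m : ℕ) (s : ℕ → Option Bool) :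
    volume (cSet a θ m s)
      = ENNReal.ofReal (a^(m+1)) * volume (cSet (1/a) θ m (fun i => (s i).map not)) := by
  have hai : a * (1/a) = 1 := by field_simp
  set L : (Fin (m+1) → ℝ) →ₗ[ℝ] (Fin (m+1) → ℝ) := (-a) • LinearMap.id with hL
  have hdet : |LinearMap.det L| = a^(m+1) := by
    rw [hL, LinearMap.det_smul, LinearMap.det_id, mul_one, Module.finrank_pi, Fintype.card_fin,
      abs_pow, abs_neg, abs_of_pos ha]
  have himg : L '' cSet (1/a) θ m (fun i => (s i).map not) = cSet a θ m s := by
    ext x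
    constructor
    · rintro ⟨y, hy, rfl⟩
      have hyL : ∀ i, L y i = -a * y i := fun i => rfl
      refine ⟨fun i => ?_, fun k hk => ?_⟩
      · have h1 := (hy.1 i).1
        have h2 := (hy.1 i).2
        rw [hyL]
        constructor
        · nlinarith
        · nlinarith [mul_le_mul_of_nonneg_left h1 ha.le]
      · have hc := hy.2 k hk
        rw [hyL, hyL]
        rcases hsk : s k with _ | (_ | _) <;>
          simp only [hsk, Option.map_some, Option.map_none, Bool.not_true, Bool.not_false,
            pok] at hc ⊢ <;>
          nlinarith [hc]
    · intro hx
      refine ⟨fun i => (-(1/a)) * x i, ⟨fun i => ?_, fun k hk => ?_⟩, ?_⟩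
      · have h1 := (hx.1 i).1
        have h2 := (hx.1 i).2
        constructor
        · show -(1/a) ≤ -(1/a) * x i
          nlinarith
        · show -(1/a) * x i ≤ 1
          nlinarith
      · have hc := hx.2 k hk
        rcases hsk : s k with _ | (_ | _) <;>
          simp only [hsk, Option.map_some, Option.map_none, Bool.not_true, Bool.not_false,
            pok] at hc ⊢ <;>
          nlinarith [hc, mul_le_mul_of_nonneg_left hc (by positivity : (0:ℝ) ≤ 1/a)]
      · funext i
        show -a * ((-(1/a)) * x i) = x i
        field_simp
  rw [← himg, Measure.addHaar_image_linearMap, hdet]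

lemma persprob_reflect {a : ℝ} (ha : 0 < a) (θ : ℝ) (m : ℕ) :
    persprob a θ m = nv (1/a) θ m (fun _ => some false) := by
  rw [persprob_eq_nv ha]
  unfold nv
  rw [volume_cSet_reflect ha θ m (fun _ => some true)]
  simp only [Option.map_some, Bool.not_true]
  rw [ENNReal.toReal_mul, ENNReal.toReal_ofReal (by positivity)]
  rw [show (1+a)^(m+1) = a^(m+1) * (1+1/a)^(m+1) by
    rw [← mul_pow]; congr 1; field_simp; ring]
  rw [eq_comm, eq_div_iff (by positivity)]
  field_simp

lemma volume_hyperplane (θ : ℝ) (M : ℕ) (i j : Fin M) (hij : i ≠ j) :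
    volume {y : Fin M → ℝ | y i = θ * y j} = 0 := by
  set L : (Fin M → ℝ) →ₗ[ℝ] ℝ := LinearMap.proj i - θ • LinearMap.proj j with hLdef
  have hker : LinearMap.ker L ≠ ⊤ := by
    intro htop
    have h1 : L (Pi.single i 1) = 0 := by
      rw [← LinearMap.mem_ker, htop]; trivial
    have : L (Pi.single i 1) = 1 := by
      simp [hLdef, Pi.single_eq_same, Pi.single_eq_of_ne (Ne.symm hij) , hij]
    rw [this] at h1
    exact one_ne_zero h1
  have hsub : {y : Fin M → ℝ | y i = θ * y j} = (LinearMap.ker L : Set (Fin M → ℝ)) := by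
    ext y
    simp [hLdef, LinearMap.mem_ker, sub_eq_zero]
  rw [hsub]
  exact Measure.addHaar_submodule (μ := volume) _ hker

lemma vol_compl (b θ : ℝ) (m k : ℕ) (hk : k + 1 ≤ m) (s : ℕ → Option Bool) :
    volume (cSet b θ m (fun i => if i = k then some true else s i))
      + volume (cSet b θ m (fun i => if i = k then some false else s i))
      = volume (cSet b θ m (fun i => if i = k then none else s i)) := by
  set A := cSet b θ m (fun i => if i = k then some true else s i)
  set B := cSet b θ m (fun i => if i = k then some false else s i)
  set C := cSet b θ m (fun i => if i = k then none else s i)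
  have hAB : A ∪ B = C := by
    ext y
    simp only [A, B, C, cSet, mem_union, mem_setOf_eq]
    constructor
    · rintro (⟨hbox, hc⟩ | ⟨hbox, hc⟩) <;>
        refine ⟨hbox, fun l hl => ?_⟩ <;>
        ( have := hc l hl
          by_cases hlk : l = k
          · simp [hlk, pok]
          · simpa [hlk] using this )
    · rintro ⟨hbox, hc⟩
      rcases le_total (θ * y ⟨k, by omega⟩) (y ⟨k+1, by omega⟩) with h | h
      · left
        refine ⟨hbox, fun l hl => ?_⟩
        by_cases hlk : l = k
        · subst hlk; simpa [pok] using h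
        · simpa [hlk] using hc l hl
      · right
        refine ⟨hbox, fun l hl => ?_⟩
        by_cases hlk : l = k
        · subst hlk; simpa [pok] using h
        · simpa [hlk] using hc l hl
  have hABi : A ∩ B ⊆ {y : Fin (m+1) → ℝ | y ⟨k+1, by omega⟩ = θ * y ⟨k, by omega⟩} := by
    rintro y ⟨hA, hB⟩
    have h1 := hA.2 k hk
    have h2 := hB.2 k hk
    simp only [if_pos rfl, pok] at h1 h2
    exact le_antisymm h2 h1
  have hz : volume (A ∩ B) = 0 := by
    refine measure_mono_null hABi ?_
    exact volume_hyperplane θ (m+1) ⟨k+1, by omega⟩ ⟨k, by omega⟩ (by simp [Fin.ext_iff])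
  have := measure_union_add_inter (μ := volume) (t := B) A
    (show MeasurableSet B from measurableSet_cSet b θ m _)
  rw [hAB, hz, add_zero] at this
  exact this.symm

lemma nv_compl {b : ℝ} (hb : 0 < b) (θ : ℝ) (m k : ℕ) (hk : k + 1 ≤ m) (s : ℕ → Option Bool) :
    nv b θ m (fun i => if i = k then some true else s i)
      + nv b θ m (fun i => if i = k then some false else s i)
      = nv b θ m (fun i => if i = k then none else s i) := by
  unfold nv
  rw [← add_div]
  congr 1
  rw [← ENNReal.toReal_add (volume_cSet_ne_top _ _ _ _) (volume_cSet_ne_top _ _ _ _),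
    vol_compl b θ m k hk s]

lemma fin_app_congr {M : ℕ} (y : Fin M → ℝ) {i i' : Fin M} (h : i.val = i'.val) : y i = y i' :=
  congrArg y (Fin.ext h)

set_option maxHeartbeats 1000000 in
lemma vol_split (b θ : ℝ) (j l : ℕ) (s : ℕ → Option Bool) (hj : s j = none) :
    volume (cSet b θ (j+1+l) s)
      = volume (cSet b θ j s) * volume (cSet b θ l (fun i => s (j+1+i))) := by
  classical
  set e : Fin (j+1) ⊕ Fin (l+1) ≃ Fin ((j+1)+(l+1)) := finSumFinEquiv
  set Φ : (Fin ((j+1)+(l+1)) → ℝ) ≃ᵐ ((Fin (j+1) → ℝ) × (Fin (l+1) → ℝ)) :=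
    (MeasurableEquiv.piCongrLeft (fun _ : Fin ((j+1)+(l+1)) => ℝ) e).symm.trans
      (MeasurableEquiv.sumPiEquivProdPi fun _ => ℝ) with hΦdef
  have hΦ : MeasurePreserving Φ volume volume :=
    (MeasureTheory.volume_measurePreserving_sumPiEquivProdPi (fun _ => ℝ)).comp
      (MeasureTheory.volume_measurePreserving_piCongrLeft (fun _ => ℝ) e).symm
  have hΦap : ∀ y : Fin ((j+1)+(l+1)) → ℝ,
      Φ y = (fun i : Fin (j+1) => y (Fin.castAdd (l+1) i),
             fun i : Fin (l+1) => y (Fin.natAdd (j+1) i)) := by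
    intro y
    rfl
  have hset : cSet b θ (j+1+l) s
      = Φ ⁻¹' ((cSet b θ j s) ×ˢ (cSet b θ l (fun i => s (j+1+i)))) := by
    ext y
    simp only [mem_preimage, hΦap, mem_prod]
    constructor
    · rintro ⟨hbox, hc⟩
      exact ⟨⟨fun i => hbox _, fun k hk => hc k (by omega)⟩,
             ⟨fun i => hbox _, fun k hk => hc (j+1+k) (by omega)⟩⟩
    · rintro ⟨⟨hAbox, hAc⟩, ⟨hBbox, hBc⟩⟩
      constructor
      · intro i
        by_cases hi : i.val < j+1
        · have h1 : i = Fin.castAdd (l+1) (⟨i.val, hi⟩ : Fin (j+1)) := Fin.ext rfl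
          rw [h1]; exact hAbox _
        · have h1 : i = Fin.natAdd (j+1) (⟨i.val - (j+1), by omega⟩ : Fin (l+1)) := by
            apply Fin.ext
            rw [Fin.coe_natAdd]
            show i.val = (j+1) + (i.val - (j+1))
            omega
          rw [h1]; exact hBbox _
      · intro k hk
        rcases lt_trichotomy k j with h | h | h
        · exact hAc k (by omega)
        · subst h
          simp [hj, pok]
        · obtain ⟨d, rfl⟩ : ∃ d, k = j + 1 + d := ⟨k - (j+1), by omega⟩
          exact hBc d (by omega)
  rw [hset]
  have h4 := hΦ.measure_preimage
    (s := (cSet b θ j s) ×ˢ (cSet b θ l (fun i => s (j+1+i))))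
    (((measurableSet_cSet b θ j s).prod (measurableSet_cSet b θ l _)).nullMeasurableSet)
  exact h4.trans (by rw [Measure.volume_eq_prod, Measure.prod_prod])

lemma nv_congr (b θ : ℝ) (m : ℕ) {s t : ℕ → Option Bool}
    (h : ∀ i, i + 1 ≤ m → s i = t i) : nv b θ m s = nv b θ m t := by
  unfold nv
  rw [cSet_congr b θ m h]

lemma nv_split {b : ℝ} (hb : 0 < b) (θ : ℝ) {m j l : ℕ} (hm : m = j + 1 + l)
    (s : ℕ → Option Bool) (hj : s j = none) :
    nv b θ m s = nv b θ j s * nv b θ l (fun i => s (j+1+i)) := by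
  subst hm
  unfold nv
  rw [vol_split b θ j l s hj, ENNReal.toReal_mul]
  rw [show (1+b)^(j+1+l+1) = (1+b)^(j+1) * (1+b)^(l+1) by rw [← pow_add]; ring_nf]
  field_simp

lemma telescope (f : ℕ → ℝ) (n : ℕ) :
    f 0 = (∑ k ∈ Finset.Icc 1 n, (-1:ℝ)^(k-1) * (f (k-1) + f k)) + (-1)^n * f n := by
  induction n with
  | zero => simp
  | succ n ih =>
      rw [Finset.sum_Icc_succ_top (by omega : 1 ≤ n + 1)]
      rw [show n + 1 - 1 = n from rfl, pow_succ]
      rw [ih]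
      ring

set_option maxHeartbeats 1000000 in
lemma part1 {a : ℝ} (ha : 0 < a) (θ : ℝ) (n : ℕ) :
    persprob a θ n =
      (∑ k ∈ Finset.Icc 1 n,
          (-1 : ℝ) ^ (k - 1) * persprob a θ (n - k) * persprob (1 / a) θ (k - 1)) +
        (-1) ^ n * persprob (1 / a) θ n := by
  have hb : 0 < 1/a := by positivity
  set t : ℕ → ℝ := fun k => nv (1/a) θ n (fun i => if i < k then some true else some false)
    with ht
  have h0 : persprob a θ n = t 0 := by
    rw [persprob_reflect ha θ n, ht]
    exact nv_congr _ _ _ (fun i hi => by simp)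
  have hn : t n = persprob (1/a) θ n := by
    rw [persprob_eq_nv hb θ n, ht]
    exact nv_congr _ _ _ (fun i hi => by simp [show i < n by omega])
  have hstep : ∀ k, 1 ≤ k → k ≤ n →
      t (k-1) + t k = persprob (1/a) θ (k-1) * persprob a θ (n-k) := by
    intro k hk1 hkn
    set j := k - 1 with hj
    set l := n - k with hl
    set s0 : ℕ → Option Bool :=
      fun i => if i < j then some true else if i = j then none else some false with hs0
    have c1 : t k = nv (1/a) θ n (fun i => if i = j then some true else s0 i) :=
      nv_congr _ _ _ (fun i hi => by
        by_cases h1 : i = j <;> by_cases h2 : i < j <;> simp [hs0, h1, h2] <;> omega)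
    have c2 : t (k-1) = nv (1/a) θ n (fun i => if i = j then some false else s0 i) :=
      nv_congr _ _ _ (fun i hi => by
        by_cases h1 : i = j <;> by_cases h2 : i < j <;> simp [hs0, h1, h2] <;> omega)
    have c3 : nv (1/a) θ n (fun i => if i = j then none else s0 i) = nv (1/a) θ n s0 :=
      nv_congr _ _ _ (fun i hi => by
        by_cases h1 : i = j <;> simp [hs0, h1])
    have c4 := nv_compl hb θ n j (by omega) s0
    have c5 : t (k-1) + t k = nv (1/a) θ n s0 := by
      rw [c1, c2, add_comm, c4, c3]
    rw [c5, nv_split hb θ (show n = j + 1 + l by omega) s0 (by simp [hs0])]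
    congr 1
    · rw [persprob_eq_nv hb θ j]
      exact nv_congr _ _ _ (fun i hi => by simp [hs0, show i < j by omega])
    · rw [persprob_reflect ha θ l]
      exact nv_congr _ _ _ (fun i hi => by
        simp [hs0, show ¬ (j+1+i < j) by omega, show ¬ (j+1+i = j) by omega])
  rw [h0, telescope t n, hn]
  congr 1
  refine Finset.sum_congr rfl (fun k hk => ?_)
  simp only [Finset.mem_Icc] at hk
  rw [hstep k hk.1 hk.2]
  ring

lemma persprob_mem_unit {a : ℝ} (ha : 0 < a) (θ : ℝ) (n : ℕ) :
    0 ≤ persprob a θ n ∧ persprob a θ n ≤ 1 := by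
  rw [persprob_eq_nv ha θ n]
  exact ⟨nv_nonneg ha θ n _, nv_le_one ha θ n _⟩

set_option maxHeartbeats 1000000 in
lemma part2 {a : ℝ} (ha : 0 < a) (θ : ℝ)
    (hrec : ∀ n : ℕ,
      persprob a θ n =
        (∑ k ∈ Finset.Icc 1 n,
            (-1 : ℝ) ^ (k - 1) * persprob a θ (n - k) * persprob (1 / a) θ (k - 1)) +
          (-1) ^ n * persprob (1 / a) θ n) :
    ∃ ε > 0, ∀ z : ℂ, ‖z‖ < ε →
        ∑' n : ℕ, (persprob a θ n : ℂ) * z ^ n =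
          (∑' n : ℕ, (persprob (1 / a) θ n : ℂ) * (-z) ^ n) /
            (1 - z * ∑' n : ℕ, (persprob (1 / a) θ n : ℂ) * (-z) ^ n) := by
  have hb : 0 < 1/a := by positivity
  set P : ℕ → ℝ := persprob a θ with hP
  set Q : ℕ → ℝ := persprob (1/a) θ with hQ
  refine ⟨1/2, by norm_num, fun z hz => ?_⟩
  have hz1 : ‖z‖ < 1 := by linarith
  -- norm bounds
  have hnormP : ∀ n, ‖(P n : ℂ) * z ^ n‖ ≤ ‖z‖ ^ n := by
    intro n
    rw [norm_mul, norm_pow, Complex.norm_real]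
    have := persprob_mem_unit ha θ n
    calc |P n| * ‖z‖^n ≤ 1 * ‖z‖^n := by
          apply mul_le_mul_of_nonneg_right _ (by positivity)
          rw [abs_le]; constructor <;> linarith [this.1, this.2]
      _ = ‖z‖^n := one_mul _
  have hnormQ : ∀ n, ‖(Q n : ℂ) * (-z) ^ n‖ ≤ ‖z‖ ^ n := by
    intro n
    rw [norm_mul, norm_pow, Complex.norm_real, norm_neg]
    have := persprob_mem_unit hb θ n
    calc |Q n| * ‖z‖^n ≤ 1 * ‖z‖^n := by
          apply mul_le_mul_of_nonneg_right _ (by positivity)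
          rw [abs_le]; constructor <;> linarith [this.1, this.2]
      _ = ‖z‖^n := one_mul _
  have hgeo : Summable (fun n : ℕ => ‖z‖ ^ n) := summable_geometric_of_lt_one (norm_nonneg z) hz1
  have hPn : Summable (fun n => ‖(P n : ℂ) * z ^ n‖) :=
    Summable.of_nonneg_of_le (fun n => norm_nonneg _) hnormP hgeo
  have hQn : Summable (fun n => ‖(Q n : ℂ) * (-z) ^ n‖) :=
    Summable.of_nonneg_of_le (fun n => norm_nonneg _) hnormQ hgeo
  have hPs : Summable (fun n => (P n : ℂ) * z ^ n) := hPn.of_norm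
  have hQs : Summable (fun n => (Q n : ℂ) * (-z) ^ n) := hQn.of_norm
  set S : ℂ := ∑' n : ℕ, (Q n : ℂ) * (-z) ^ n with hS
  -- S norm bound
  have hSnorm : ‖S‖ ≤ (1 - ‖z‖)⁻¹ := by
    calc ‖S‖ ≤ ∑' n : ℕ, ‖(Q n : ℂ) * (-z) ^ n‖ := norm_tsum_le_tsum_norm hQn
      _ ≤ ∑' n : ℕ, ‖z‖ ^ n := Summable.tsum_le_tsum hnormQ hQn hgeo
      _ = (1 - ‖z‖)⁻¹ := tsum_geometric_of_lt_one (norm_nonneg z) hz1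
  have hzS : ‖z * S‖ < 1 := by
    rw [norm_mul]
    calc ‖z‖ * ‖S‖ ≤ ‖z‖ * (1 - ‖z‖)⁻¹ := by
          apply mul_le_mul_of_nonneg_left hSnorm (norm_nonneg z)
      _ < 1 := by
          rw [mul_inv_lt_iff₀ (by linarith), one_mul]
          linarith
  have hne : 1 - z * S ≠ 0 := by
    intro h
    have : (1:ℂ) = z * S := by linear_combination h
    rw [← this] at hzS
    simp at hzS
  -- Cauchy product
  have hcauchy := hasSum_sum_range_mul_of_summable_norm hPn hQn
  have hdsumm : Summable (fun n => ∑ k ∈ Finset.range (n + 1),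
      ((P k : ℂ) * z ^ k) * ((Q (n - k) : ℂ) * (-z) ^ (n - k))) := hcauchy.summable
  have hdval : (∑' n, ∑ k ∈ Finset.range (n + 1),
      ((P k : ℂ) * z ^ k) * ((Q (n - k) : ℂ) * (-z) ^ (n - k)))
      = (∑' n, (P n : ℂ) * z ^ n) * S := hcauchy.tsum_eq
  -- termwise recursion
  have hterm : ∀ n : ℕ, (P (n+1) : ℂ) * z ^ (n+1)
      = (Q (n+1) : ℂ) * (-z) ^ (n+1)
        + z * ∑ k ∈ Finset.range (n + 1),
            ((P k : ℂ) * z ^ k) * ((Q (n - k) : ℂ) * (-z) ^ (n - k)) := by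
    intro n
    have hr := hrec (n+1)
    have hsum_eq : (∑ k ∈ Finset.Icc 1 (n+1),
        (-1 : ℝ) ^ (k - 1) * P ((n+1) - k) * Q (k - 1))
        = ∑ k ∈ Finset.range (n+1), (-1:ℝ)^(n-k) * P k * Q (n-k) := by
      rw [← Finset.Ico_add_one_right_eq_Icc, Finset.sum_Ico_eq_sum_range]
      rw [show n + 1 + 1 - 1 = n + 1 by omega]
      rw [← Finset.sum_range_reflect]
      refine Finset.sum_congr rfl (fun k hk => ?_)
      simp only [Finset.mem_range] at hk
      rw [show 1 + (n + 1 - 1 - k) - 1 = n - k by omega,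
        show n + 1 - (1 + (n + 1 - 1 - k)) = k by omega]
    rw [hsum_eq] at hr
    have : (P (n+1) : ℂ) = (∑ k ∈ Finset.range (n+1), (-1:ℂ)^(n-k) * P k * Q (n-k))
        + (-1)^(n+1) * Q (n+1) := by
      rw [hr]
      push_cast
      ring
    rw [this, add_mul, Finset.sum_mul]
    have hAA : ∀ k ∈ Finset.range (n+1),
        ((-1:ℂ)^(n-k) * (P k : ℂ) * (Q (n-k) : ℂ)) * z^(n+1)
          = z * (((P k : ℂ) * z ^ k) * ((Q (n - k) : ℂ) * (-z) ^ (n - k))) := by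
      intro k hk
      simp only [Finset.mem_range] at hk
      rw [show ((-z)^(n-k) : ℂ) = (-1)^(n-k) * z^(n-k) by rw [neg_pow]]
      rw [show (z:ℂ)^(n+1) = z * (z^k * z^(n-k)) by
        rw [← pow_add, show k + (n-k) = n by omega, ← pow_succ']]
      ring
    rw [Finset.sum_congr rfl hAA]
    rw [show ((-z)^(n+1) : ℂ) = (-1)^(n+1) * z^(n+1) by rw [neg_pow]]
    rw [Finset.mul_sum]
    ring
  -- assemble
  rw [eq_div_iff hne]
  have hQshift : Summable (fun n => (Q (n+1) : ℂ) * (-z) ^ (n+1)) :=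
    ((summable_nat_add_iff 1).mpr hQs)
  have hdshift : Summable (fun n => z * ∑ k ∈ Finset.range (n + 1),
      ((P k : ℂ) * z ^ k) * ((Q (n - k) : ℂ) * (-z) ^ (n - k))) := hdsumm.mul_left z
  calc (∑' n, (P n : ℂ) * z ^ n) * (1 - z * S)
      = (∑' n, (P n : ℂ) * z ^ n) - z * ((∑' n, (P n : ℂ) * z ^ n) * S) := by ring
    _ = (∑' n, (P n : ℂ) * z ^ n) - z * ∑' n, ∑ k ∈ Finset.range (n + 1),
          ((P k : ℂ) * z ^ k) * ((Q (n - k) : ℂ) * (-z) ^ (n - k)) := by rw [hdval]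
    _ = S := by
        rw [sub_eq_iff_eq_add]
        rw [Summable.tsum_eq_zero_add hPs, hS, Summable.tsum_eq_zero_add hQs]
        rw [← tsum_mul_left (a := z)]
        rw [add_assoc]
        rw [← Summable.tsum_add hQshift hdshift]
        simp only [pow_zero, mul_one]
        rw [hP, hQ]
        show (persprob a θ 0 : ℂ) + _ = (persprob (1/a) θ 0 : ℂ) + _
        rw [show persprob a θ 0 = 1 from rfl, show persprob (1/a) θ 0 = 1 from rfl]
        congr 1
        exact tsum_congr (fun n => hterm n)

theorem second_hidden_duality (a θ : ℝ) (hθ : θ < 0) (ha : 0 < a) :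
    (∀ n : ℕ,
      persprob a θ n =
        (∑ k ∈ Finset.Icc 1 n,
            (-1 : ℝ) ^ (k - 1) * persprob a θ (n - k) * persprob (1 / a) θ (k - 1)) +
          (-1) ^ n * persprob (1 / a) θ n) ∧
      ∃ ε > 0, ∀ z : ℂ, ‖z‖ < ε →
        ∑' n : ℕ, (persprob a θ n : ℂ) * z ^ n =
          (∑' n : ℕ, (persprob (1 / a) θ n : ℂ) * (-z) ^ n) /
            (1 - z * ∑' n : ℕ, (persprob (1 / a) θ n : ℂ) * (-z) ^ n) := by
  exact ⟨fun n => part1 ha θ n, part2 ha θ (fun n => part1 ha θ n)⟩
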